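/- arXiv:0802.3801 — 3 statements merged into one kernel-verified Lean document; each statement's English description precedes it below -/
import Mathlib

section
/- Let p, q, r₀, s₀ be natural numbers with p, q ≥ 1 and q·r₀ − p·s₀ = 1, let N ∈ ℕ, and let μ₁, μ₂ be nonzero complex numbers with |μ₁| < 1 and |μ₁|^p·|μ₂|^q = 1. Set D₀ = |μ₁|^{1/(q(r₀ + s₀ + (N+1)(p+q)))}. Then for every m = (m₁, m₂) ∈ ℕ² of the form m = k₁·(r₀, s₀) + k₂·(p, q) with integers k₁ ≥ 1 and k₂ ≤ (N+1)·k₁, one has |μ₁^{m₁} · μ₂^{m₂}| ≤ D₀^{m₁ + m₂}. -/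
/-!
Write `a = ‖μ₁‖`. The resonance `a ^ p * ‖μ₂‖ ^ q = 1` gives
`‖μ₁ ^ m₁ * μ₂ ^ m₂‖ ^ q = a ^ (q m₁ - p m₂) = a ^ k₁`, since `q r₀ - p s₀ = 1` kills the
`k₂`-part of `m`. On the other hand `m₁ + m₂ = k₁ (r₀ + s₀) + k₂ (p + q) ≤ k₁ R` with
`R = r₀ + s₀ + (N + 1)(p + q)`, and `t ↦ a ^ t` is antitone because `a < 1`, so
`a ^ k₁ ≤ a ^ ((m₁ + m₂) / R) = (D₀ ^ (m₁ + m₂)) ^ q`.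
-/

theorem pow_mul_pow_pow_eq_zpow_of_pow_mul_pow_eq_one {G₀ : Type*} [CommGroupWithZero G₀]
    {x y : G₀} {p q : ℕ} (hx : x ≠ 0) (h : x ^ p * y ^ q = 1) (m₁ m₂ : ℕ) :
    (x ^ m₁ * y ^ m₂) ^ q = x ^ ((q * m₁ - p * m₂ : ℤ)) := by
  have hyq : y ^ q = (x ^ p)⁻¹ := eq_inv_of_mul_eq_one_right h
  rw [mul_pow, ← pow_mul, ← pow_mul, pow_mul' y, hyq, zpow_sub₀ hx, div_eq_mul_inv]
  norm_cast
  rw [inv_pow, ← pow_mul, mul_comm m₁]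

theorem Real.le_pow_of_pow_eq_zpow {a c R : ℝ} {q n : ℕ} {k : ℤ} (ha₀ : 0 < a) (ha₁ : a ≤ 1)
    (hc : 0 ≤ c) (hq : q ≠ 0) (hR : 0 < R) (hcq : c ^ q = a ^ k) (hn : n ≤ k * R) :
    c ≤ (a ^ (1 / (q * R))) ^ n := by
  refine (pow_le_pow_iff_left₀ hc (by positivity) hq).1 ?_
  calc c ^ q = a ^ (k : ℝ) := by rw [hcq, Real.rpow_intCast]
    _ ≤ a ^ (n / R) := Real.rpow_le_rpow_of_exponent_ge ha₀ ha₁ ((div_le_iff₀ hR).2 hn)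
    _ = ((a ^ (1 / (q * R))) ^ n) ^ q := by
      rw [← Real.rpow_natCast, ← Real.rpow_natCast, ← Real.rpow_mul ha₀.le,
        ← Real.rpow_mul ha₀.le]
      field_simp

theorem eigenvalue_estimate_general (p q r₀ s₀ N : ℕ) (hq : 1 ≤ q)
    (hbez : (q : ℤ) * r₀ - (p : ℤ) * s₀ = 1)
    (μ₁ μ₂ : ℂ) (hμ₁ : μ₁ ≠ 0)
    (habs : ‖μ₁‖ < 1)
    (hres : ‖μ₁‖ ^ p * ‖μ₂‖ ^ q = 1)
    (D₀ : ℝ)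
    (hD₀ : D₀ = ‖μ₁‖ ^ ((1 : ℝ) / (q * (r₀ + s₀ + (N + 1) * (p + q))))) :
    ∀ m₁ m₂ : ℕ, ∀ k₁ k₂ : ℤ, 1 ≤ k₁ → k₂ ≤ (N + 1 : ℤ) * k₁ →
      (m₁ : ℤ) = k₁ * r₀ + k₂ * p → (m₂ : ℤ) = k₁ * s₀ + k₂ * q →
      ‖μ₁ ^ m₁ * μ₂ ^ m₂‖ ≤ D₀ ^ (m₁ + m₂) := by
  intro m₁ m₂ k₁ k₂ hk₁ hk₂ hm₁ hm₂
  have hexp : (q * m₁ - p * m₂ : ℤ) = k₁ := by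
    rw [hm₁, hm₂]; linear_combination k₁ * hbez
  have hsum : ((m₁ + m₂ : ℕ) : ℤ) ≤ k₁ * (r₀ + s₀ + (N + 1) * (p + q)) := by
    push_cast [hm₁, hm₂]
    nlinarith [mul_le_mul_of_nonneg_right hk₂ (by positivity : (0 : ℤ) ≤ p + q)]
  have hnorm : ‖μ₁ ^ m₁ * μ₂ ^ m₂‖ ^ q = ‖μ₁‖ ^ k₁ := by
    rw [norm_mul, norm_pow, norm_pow, ← hexp,
      pow_mul_pow_pow_eq_zpow_of_pow_mul_pow_eq_one (norm_ne_zero_iff.2 hμ₁) hres]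
  rw [hD₀]
  exact Real.le_pow_of_pow_eq_zpow (norm_pos_iff.2 hμ₁) habs.le (norm_nonneg _) (by omega)
    (by positivity) hnorm (by exact_mod_cast hsum)

theorem eigenvalue_estimate (p q r₀ s₀ N : ℕ) (hp : 1 ≤ p) (hq : 1 ≤ q)
    (hbez : (q : ℤ) * r₀ - (p : ℤ) * s₀ = 1)
    (μ₁ μ₂ : ℂ) (hμ₁ : μ₁ ≠ 0) (hμ₂ : μ₂ ≠ 0)
    (habs : ‖μ₁‖ < 1)
    (hres : ‖μ₁‖ ^ p * ‖μ₂‖ ^ q = 1)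
    (D₀ : ℝ)
    (hD₀ : D₀ = ‖μ₁‖ ^ ((1 : ℝ) / (q * (r₀ + s₀ + (N + 1) * (p + q))))) :
    ∀ m₁ m₂ : ℕ, ∀ k₁ k₂ : ℤ, 1 ≤ k₁ → k₂ ≤ (N + 1 : ℤ) * k₁ →
      (m₁ : ℤ) = k₁ * r₀ + k₂ * p → (m₂ : ℤ) = k₁ * s₀ + k₂ * q →
      ‖μ₁ ^ m₁ * μ₂ ^ m₂‖ ≤ D₀ ^ (m₁ + m₂) :=
  eigenvalue_estimate_general p q r₀ s₀ N hq hbez μ₁ μ₂ hμ₁ habs hres D₀ hD₀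
end

section
/- Let p, q, r₀, s₀ be positive integers with q·r₀ − p·s₀ = 1 and let N ∈ ℕ. If m = (m₁, m₂) = k₁·(r₀, s₀) + k₂·(p, q) with integers k₁ ≥ 1 and k₂ ≥ (N+1)·k₁ + 1, and m₁ ≥ 1, then m₂/m₁ ≥ (s₀ + (N+1)q)/(r₀ + (N+1)p). -/
/-! Comparing slopes is comparing a 2×2 determinant with zero. In the basis `(r₀, s₀), (p, q)` of
determinant `1`, the determinant of `m = k₁ (r₀, s₀) + k₂ (p, q)` against `(r₀, s₀) + (N + 1) (p, q)`
is `k₂ - (N + 1) k₁`, which is positive by hypothesis. -/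

theorem combination_cross_sub {R : Type*} [CommRing R] (r s p q k₁ k₂ t : R) :
    (k₁ * s + k₂ * q) * (r + t * p) - (s + t * q) * (k₁ * r + k₂ * p) =
      (k₂ - t * k₁) * (q * r - p * s) := by
  ring

theorem slope_ge_in_B1_general (p q r₀ s₀ : ℤ) (hp : 0 < p)
    (hr₀ : 0 < r₀) (hbez : q * r₀ - p * s₀ = 1) (N : ℕ)
    (k₁ k₂ m₁ m₂ : ℤ) (hk₂ : (N + 1 : ℤ) * k₁ + 1 ≤ k₂)
    (hm₁ : m₁ = k₁ * r₀ + k₂ * p) (hm₂ : m₂ = k₁ * s₀ + k₂ * q)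
    (hm₁pos : 1 ≤ m₁) :
    ((s₀ : ℚ) + (N + 1) * q) / ((r₀ : ℚ) + (N + 1) * p) ≤ (m₂ : ℚ) / (m₁ : ℚ) := by
  have hcross : (s₀ + (N + 1) * q) * m₁ ≤ m₂ * (r₀ + (N + 1) * p) := by
    have h := combination_cross_sub r₀ s₀ p q k₁ k₂ (N + 1)
    rw [hbez, mul_one, ← hm₁, ← hm₂] at h
    linarith
  have hden : (0 : ℚ) < r₀ + (N + 1) * p := by positivity
  rw [div_le_div_iff₀ hden (by exact_mod_cast hm₁pos)]
  exact_mod_cast hcross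

theorem slope_ge_in_B1 (p q r₀ s₀ : ℤ) (hp : 0 < p) (hq : 0 < q)
    (hr₀ : 0 < r₀) (hs₀ : 0 < s₀) (hbez : q * r₀ - p * s₀ = 1) (N : ℕ)
    (k₁ k₂ m₁ m₂ : ℤ) (hk₁ : 1 ≤ k₁) (hk₂ : (N + 1 : ℤ) * k₁ + 1 ≤ k₂)
    (hm₁ : m₁ = k₁ * r₀ + k₂ * p) (hm₂ : m₂ = k₁ * s₀ + k₂ * q)
    (hm₁pos : 1 ≤ m₁) :
    ((s₀ : ℚ) + (N + 1) * q) / ((r₀ : ℚ) + (N + 1) * p) ≤ (m₂ : ℚ) / (m₁ : ℚ) :=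
  slope_ge_in_B1_general p q r₀ s₀ hp hr₀ hbez N k₁ k₂ m₁ m₂ hk₂ hm₁ hm₂ hm₁pos
end

section
/- Let p, q, r₀, s₀, r₁, s₁, N be as follows: p, q coprime positive integers, q·r₀ − p·s₀ = 1 with 0 ≤ r₀ ≤ p, 0 ≤ s₀ ≤ q, and (r₁, s₁) = (p − r₀, q − s₀). Define G₀ = {k₁(r₀,s₀) + k₂(p,q) : k₁ ≥ 1, k₂ ≤ (N+1)k₁, k₁, k₂ ∈ ℤ} ∩ ℕ² and B₀ = ℕ² \ G₀. Then B₀ ⊆ 𝐵̃ := {(m₁, m₂) ∈ ℕ² : m₂·(r₀ + (N+1)p) ≥ m₁·(s₀ + (N+1)q)} ∪ {(0, m₂) : m₂ ∈ ℕ}. -/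
theorem B0_subset_Btilde (p q r₀ s₀ r₁ s₁ N : ℕ)
    (hp : 0 < p) (hq : 0 < q) (hpq : Nat.Coprime p q)
    (hbez : (q : ℤ) * r₀ - (p : ℤ) * s₀ = 1) (hr₀p : r₀ ≤ p) (hs₀q : s₀ ≤ q)
    (hr₁ : r₁ = p - r₀) (hs₁ : s₁ = q - s₀)
    (G₀ : Set (ℕ × ℕ))
    (hG₀ : G₀ = {m | ∃ k₁ k₂ : ℤ, 1 ≤ k₁ ∧ k₂ ≤ (N + 1 : ℤ) * k₁ ∧
      (m.1 : ℤ) = k₁ * r₀ + k₂ * p ∧ (m.2 : ℤ) = k₁ * s₀ + k₂ * q})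
    (B₀ : Set (ℕ × ℕ)) (hB₀ : B₀ = G₀ᶜ) :
    B₀ ⊆ {m : ℕ × ℕ | m.1 * (s₀ + (N + 1) * q) ≤ m.2 * (r₀ + (N + 1) * p)} ∪
      {m : ℕ × ℕ | m.1 = 0} := by
  subst hB₀
  intro m hm
  by_cases h1 : m.1 = 0
  · exact Or.inr h1
  · left
    by_contra hlt
    simp only [Set.mem_setOf_eq] at hlt
    push_neg at hlt
    apply hm
    rw [hG₀]
    refine ⟨(q : ℤ) * m.1 - (p : ℤ) * m.2, (r₀ : ℤ) * m.2 - (s₀ : ℤ) * m.1, ?_, ?_, by linear_combination (-(m.1:ℤ))*hbez, by linear_combination (-(m.2:ℤ))*hbez⟩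
    · -- 1 ≤ q m₁ - p m₂
      have hlt' : ((m.2 : ℤ)) * (r₀ + (N + 1) * p) < (m.1 : ℤ) * (s₀ + (N + 1) * q) := by
        exact_mod_cast hlt
      by_contra hk
      push_neg at hk
      have hqm : (q : ℤ) * m.1 ≤ (p : ℤ) * m.2 := by linarith
      have h2 : (m.1 : ℤ) * s₀ * q ≤ (m.2 : ℤ) * r₀ * q := by nlinarith [Int.natCast_nonneg m.2]
      have hq' : (0 : ℤ) < q := by exact_mod_cast hq
      have h3 : (m.1 : ℤ) * s₀ ≤ (m.2 : ℤ) * r₀ :=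
        le_of_mul_le_mul_right (by linarith) hq'
      have h4 := mul_le_mul_of_nonneg_left hqm (by positivity : (0:ℤ) ≤ (N:ℤ)+1)
      nlinarith [h3, h4]
    · -- k₂ ≤ (N+1) k₁
      have hlt' : ((m.2 : ℤ)) * (r₀ + (N + 1) * p) < (m.1 : ℤ) * (s₀ + (N + 1) * q) := by
        exact_mod_cast hlt
      nlinarith
end
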